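/- Let λ be infinite and D a regular λ⁺-good ultrafilter on λ (in particular D is countably incomplete). Then for every structure M in a countable language, the ultrapower M^λ/D is λ⁺-saturated. -/

import Mathlib

/-!
Since the language is countable, a type `p` over at most `#α` parameters can be enumerated as
`(φ i)_{i ∈ α}`. By Łoś, `f u := {t | some y ∈ M satisfies every φ i, i ∈ u, with the parameters
read at coordinate t}` lies in `D`, and it is antitone; intersecting with the regularizing sets
`X i` keeps this true. Goodness gives a multiplicative refinement `f'`, and regularity makes
`U t := {i | t ∈ f' {i}}` finite. Multiplicativity puts `t` in `f' (U t) ⊆ f (U t)`, so a `y`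
as above exists for `u = U t`; these `y` form an element of the ultrapower which satisfies `φ i`
on `f' {i} ∈ D`, for every `i`.
-/

open FirstOrder Filter Cardinal

universe u

/-- `M` realizes all types (in one free variable) over parameter sets of
cardinality at most `lam`, i.e. `M` is `lam⁺`-saturated. -/
def realizesTypesLE (L : FirstOrder.Language.{u, u}) (M : Type u) [L.Structure M]
    (lam : Cardinal.{u}) : Prop :=
  ∀ A : Set M, #A ≤ lam →
    ∀ p : Set (L.Formula (↥A ⊕ Fin 1)),
      (∀ s : Finset (L.Formula (↥A ⊕ Fin 1)), ↑s ⊆ p →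
        ∃ x : M, ∀ φ ∈ s, φ.Realize (Sum.elim Subtype.val fun _ => x)) →
      ∃ x : M, ∀ φ ∈ p, φ.Realize (Sum.elim Subtype.val fun _ => x)

namespace FirstOrder.Language

theorem card_formula_le {L : Language.{u, u}} {β : Type u} {κ : Cardinal.{u}} (hκ : ℵ₀ ≤ κ)
    (hβ : #β ≤ κ) (hL : L.card ≤ κ) : #(L.Formula β) ≤ κ :=
  calc #(L.Formula β) ≤ #(Σ n, L.BoundedFormula β n) :=
        mk_le_of_injective (f := fun φ => ⟨0, φ⟩) fun φ ψ h => by simpa using h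
    _ ≤ max ℵ₀ (lift.{u} #β + lift.{u} L.card) := BoundedFormula.card_le
    _ ≤ κ := by
      rw [lift_id, lift_id]
      exact max_le hκ (add_le_of_le hκ hβ hL)

theorem Ultraproduct.realize_sumElim_coe {L : Language} {α M : Type*} [L.Structure M]
    [Nonempty M] (D : Ultrafilter α) {γ : Type*} (φ : L.Formula (γ ⊕ Fin 1)) (a : γ → α → M)
    (x : α → M) :
    φ.Realize (Sum.elim (fun c => (a c : (D : Filter α).Product fun _ => M)) fun _ => x :
        γ ⊕ Fin 1 → (D : Filter α).Product fun _ => M) ↔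
      ∀ᶠ t in (D : Filter α), φ.Realize (Sum.elim (fun c => a c t) fun _ => x t) := by
  have hcoe : (Sum.elim (fun c => (a c : (D : Filter α).Product fun _ => M)) fun _ => x :
      γ ⊕ Fin 1 → (D : Filter α).Product fun _ => M) =
      fun i => ((Sum.elim a fun _ => x : γ ⊕ Fin 1 → α → M) i :
        (D : Filter α).Product fun _ => M) := by
    funext i; cases i <;> rfl
  have hcoord : ∀ t, (fun i : γ ⊕ Fin 1 => Sum.elim a (fun _ => x) i t) =
      Sum.elim (fun c => a c t) fun _ => x t :=
    fun t => by funext i; cases i <;> rfl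
  rw [hcoe]
  refine (Ultraproduct.realize_formula_cast (M := fun _ => M) φ (Sum.elim a fun _ => x)).trans ?_
  simp only [hcoord]

end FirstOrder.Language

open FirstOrder.Language

theorem Set.finite_setOf_mem_of_biInter_eq_empty {ι α : Type*} {X : ι → Set α}
    (hX : ∀ s : Set ι, s.Infinite → ⋂ i ∈ s, X i = ∅) (t : α) : {i | t ∈ X i}.Finite := by
  by_contra h
  have ht : t ∈ ⋂ i ∈ {i | t ∈ X i}, X i := Set.mem_iInter₂.2 fun _ hi => hi
  rw [hX _ h] at ht
  exact ht

theorem Finset.mem_of_forall_mem_singleton {ι α : Type*} [DecidableEq ι] {f : Finset ι → Set α}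
    (hf : ∀ u v, f u ∩ f v = f (u ∪ v)) {t : α} {w : Finset ι} (hw : w.Nonempty)
    (h : ∀ i ∈ w, t ∈ f {i}) : t ∈ f w := by
  induction hw using Finset.Nonempty.cons_induction with
  | singleton i => exact h i (Finset.mem_singleton_self i)
  | cons i w hi hw ih =>
    rw [Finset.cons_eq_insert, Finset.insert_eq, ← hf]
    exact ⟨h i (by simp), ih fun j hj => h j (by simp [hj])⟩

namespace Ultrafilter

variable {α : Type u}

def IsRegular (D : Ultrafilter α) : Prop :=
  ∃ X : α → Set α, (∀ i, X i ∈ D) ∧ ∀ s : Set α, s.Infinite → ⋂ i ∈ s, X i = ∅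

/-- `D` is `λ⁺`-good for `λ = #α`. -/
def IsGood [DecidableEq α] (D : Ultrafilter α) : Prop :=
  ∀ f : Finset α → Set α, (∀ u, f u ∈ D) → (∀ u v : Finset α, u ⊆ v → f v ⊆ f u) →
    ∃ f' : Finset α → Set α, (∀ u, f' u ∈ D) ∧ (∀ u, f' u ⊆ f u) ∧
      ∀ u v : Finset α, f' u ∩ f' v = f' (u ∪ v)

theorem IsGood.exists_distribution [DecidableEq α] {D : Ultrafilter α} (hgood : D.IsGood)
    (hreg : D.IsRegular) (P : Finset α → α → Prop) (hP : Antitone P)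
    (hlarge : ∀ u, ∀ᶠ t in (D : Filter α), P u t) :
    ∃ U : α → Finset α, ∀ i, ∀ᶠ t in (D : Filter α), i ∈ U t ∧ P (U t) t := by
  obtain ⟨X, hXD, hX⟩ := hreg
  obtain ⟨f', hf'D, hf'f, hf'mul⟩ := hgood (fun u => (⋂ i ∈ u, X i) ∩ {t | P u t})
    (fun u => inter_mem ((biInter_finset_mem u).2 fun i _ => hXD i) (hlarge u))
    (fun u v huv t ht => ⟨Set.biInter_subset_biInter_left huv ht.1, hP huv t ht.2⟩)
  have hfin : ∀ t, {i | t ∈ f' {i}}.Finite := fun t =>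
    (Set.finite_setOf_mem_of_biInter_eq_empty hX t).subset fun i hi => by
      simpa using (hf'f {i} hi).1
  refine ⟨fun t => (hfin t).toFinset, fun i => mem_of_superset (hf'D {i}) fun t ht => ?_⟩
  have hi : i ∈ (hfin t).toFinset := by simpa using ht
  have htU : t ∈ f' (hfin t).toFinset :=
    Finset.mem_of_forall_mem_singleton hf'mul ⟨i, hi⟩ fun j hj => by simpa using hj
  exact ⟨hi, (hf'f _ htU).2⟩

theorem IsGood.exists_realize [DecidableEq α] {D : Ultrafilter α} (hgood : D.IsGood)
    (hreg : D.IsRegular) {L : Language} {M : Type*} [L.Structure M] [Nonempty M] {γ : Type*}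
    (a : γ → (D : Filter α).Product fun _ => M) (φ : α → L.Formula (γ ⊕ Fin 1))
    (hfin : ∀ u : Finset α, ∃ x, ∀ i ∈ u, (φ i).Realize (Sum.elim a fun _ => x)) :
    ∃ x, ∀ i, (φ i).Realize (Sum.elim a fun _ => x) := by
  obtain ⟨r, rfl⟩ : ∃ r : γ → α → M, (fun c => (r c : (D : Filter α).Product fun _ => M)) = a :=
    ⟨fun c => (a c).out, funext fun c => Quotient.out_eq _⟩
  let P : Finset α → α → Prop := fun u t =>
    ∃ y : M, ∀ i ∈ u, (φ i).Realize (Sum.elim (fun c => r c t) fun _ => y)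
  have hlarge : ∀ u, ∀ᶠ t in (D : Filter α), P u t := by
    intro u
    obtain ⟨x, hx⟩ := hfin u
    obtain ⟨x, rfl⟩ : ∃ x' : α → M, (x' : (D : Filter α).Product fun _ => M) = x :=
      ⟨x.out, Quotient.out_eq x⟩
    simp only [Ultraproduct.realize_sumElim_coe] at hx
    exact ((eventually_all_finset u).2 hx).mono fun t ht => ⟨x t, ht⟩
  obtain ⟨U, hU⟩ := hgood.exists_distribution hreg P
    (fun u v huv t ⟨y, hy⟩ => ⟨y, fun i hi => hy i (huv hi)⟩) hlarge
  refine ⟨((fun t => Classical.epsilon fun y : M =>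
    ∀ i ∈ U t, (φ i).Realize (Sum.elim (fun c => r c t) fun _ => y) : α → M) :
      (D : Filter α).Product fun _ => M), fun i => ?_⟩
  rw [Ultraproduct.realize_sumElim_coe]
  exact (hU i).mono fun t ⟨hi, hP⟩ => Classical.epsilon_spec hP i hi

end Ultrafilter

/-- Keisler: for a regular `λ⁺`-good ultrafilter `D` on `α` and any structure `M` in
a countable language, the ultrapower `M^α/D` is `#α⁺`-saturated. -/
theorem stmt_7 {L : FirstOrder.Language.{u, u}} (hL : L.card ≤ ℵ₀)
    {α : Type u} [Infinite α] [DecidableEq α] (D : Ultrafilter α)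
    (hreg : ∃ X : α → Set α, (∀ i, X i ∈ D) ∧
      ∀ s : Set α, s.Infinite → ⋂ i ∈ s, X i = ∅)
    (hgood : ∀ f : Finset α → Set α, (∀ u, f u ∈ D) →
      (∀ u v : Finset α, u ⊆ v → f v ⊆ f u) →
      ∃ f' : Finset α → Set α, (∀ u, f' u ∈ D) ∧ (∀ u, f' u ⊆ f u) ∧
        ∀ u v : Finset α, f' u ∩ f' v = f' (u ∪ v))
    (M : Type u) [L.Structure M] [Nonempty M] :
    realizesTypesLE L ((D : Filter α).Product fun _ => M) #α := by
  classical
  intro A hA p hp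
  rcases p.eq_empty_or_nonempty with rfl | ⟨φ₀, hφ₀⟩
  · exact ⟨Classical.arbitrary _, by simp⟩
  have hα : ℵ₀ ≤ #α := aleph0_le_mk α
  have hcard : #p ≤ #α := (mk_subtype_le p).trans <| card_formula_le hα
    (by simpa using add_le_of_le hα hA (one_lt_aleph0.le.trans hα)) (hL.trans hα)
  obtain ⟨e⟩ := hcard
  have : Nonempty p := ⟨⟨φ₀, hφ₀⟩⟩
  obtain ⟨x, hx⟩ := Ultrafilter.IsGood.exists_realize (D := D) hgood hreg Subtype.val
    (fun i => (Function.invFun e i).1) fun s => by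
      obtain ⟨x, hx⟩ := hp (s.image fun i => (Function.invFun e i).1) (by simp [Set.subset_def])
      exact ⟨x, fun i hi => hx _ (Finset.mem_image_of_mem _ hi)⟩
  refine ⟨x, fun φ hφ => ?_⟩
  obtain ⟨i, hi⟩ := Function.invFun_surjective e.injective ⟨φ, hφ⟩
  simpa [hi] using hx i
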